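/- arXiv:2003.13466 — 9 statements merged into one kernel-verified Lean document; each statement's English description precedes it below -/
import Mathlib

section
/- Every positive rational number appears exactly once as a label in the Calkin-Wilf tree. -/
/-!
The label of a nonempty path is `> 1` if its last step is a right step and `< 1` if it is a
left step, while the root is `1`; so the label determines the last step, and since both steps
are injective on positive rationals, induction on the path shows that labels determine paths.
Conversely, `a / b` with `a ≠ b` is a child of `(a - b) / b` or of `a / (b - a)`, and `a + b`
decreases, so every `a / b` is reached from `1 / 1`.
-/

/-- The label of the Calkin–Wilf tree node reached from the root `1/1` by the
given path of steps read left-to-right (`true` = right step `q ↦ q+1`,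
`false` = left step `q ↦ q/(q+1)`). -/
def cwOfPath (l : List Bool) : ℚ :=
  l.foldl (fun q s => if s then q + 1 else q / (q + 1)) 1

@[simp]
lemma cwOfPath_nil : cwOfPath [] = 1 := rfl

@[simp]
lemma cwOfPath_append_true (l : List Bool) : cwOfPath (l ++ [true]) = cwOfPath l + 1 := by
  simp [cwOfPath]

@[simp]
lemma cwOfPath_append_false (l : List Bool) :
    cwOfPath (l ++ [false]) = cwOfPath l / (cwOfPath l + 1) := by
  simp [cwOfPath]

lemma cwOfPath_pos (l : List Bool) : 0 < cwOfPath l := by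
  induction l using List.reverseRecOn with
  | nil => simp
  | append_singleton l s ih => cases s <;> simp <;> positivity

lemma cwOfPath_append_lt_one_iff (l : List Bool) (s : Bool) :
    cwOfPath (l ++ [s]) < 1 ↔ s = false := by
  have hpos := cwOfPath_pos l
  cases s
  · simp [div_lt_one (by positivity : 0 < cwOfPath l + 1)]
  · simp [hpos.le]

lemma cwOfPath_append_ne_one (l : List Bool) (s : Bool) : cwOfPath (l ++ [s]) ≠ 1 := by
  have hpos := cwOfPath_pos l
  cases s
  · simp [div_eq_one_iff_eq (by positivity : cwOfPath l + 1 ≠ 0)]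
  · simpa using hpos.ne'

lemma cwOfPath_append_singleton_inj {l l' : List Bool} {s s' : Bool}
    (h : cwOfPath (l ++ [s]) = cwOfPath (l' ++ [s'])) :
    s = s' ∧ cwOfPath l = cwOfPath l' := by
  obtain rfl : s = s' := by
    have hlt := cwOfPath_append_lt_one_iff l s
    rw [h, cwOfPath_append_lt_one_iff] at hlt
    cases s <;> simpa [eq_comm] using hlt
  refine ⟨rfl, ?_⟩
  have hpos := cwOfPath_pos l
  have hpos' := cwOfPath_pos l'
  cases s
  · simp only [cwOfPath_append_false] at h
    rw [div_eq_div_iff (by positivity) (by positivity)] at h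
    linarith
  · simpa using h

theorem cwOfPath_injective : Function.Injective cwOfPath := by
  intro l
  induction l using List.reverseRecOn with
  | nil =>
    intro l' h
    rcases l'.eq_nil_or_concat' with rfl | ⟨l', s', rfl⟩
    · rfl
    · exact absurd h.symm (cwOfPath_append_ne_one l' s')
  | append_singleton l s ih =>
    intro l' h
    rcases l'.eq_nil_or_concat' with rfl | ⟨l', s', rfl⟩
    · exact absurd h (cwOfPath_append_ne_one l s)
    · obtain ⟨rfl, hl⟩ := cwOfPath_append_singleton_inj h
      rw [ih hl]

theorem exists_cwOfPath_eq_div (a b : ℕ) (ha : 0 < a) (hb : 0 < b) :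
    ∃ l, cwOfPath l = (a : ℚ) / b := by
  rcases lt_trichotomy a b with hab | rfl | hab
  · obtain ⟨l, hl⟩ := exists_cwOfPath_eq_div a (b - a) ha (Nat.sub_pos_of_lt hab)
    refine ⟨l ++ [false], ?_⟩
    have hba : (b : ℚ) - a ≠ 0 := sub_ne_zero.mpr (by exact_mod_cast hab.ne')
    rw [cwOfPath_append_false, hl, Nat.cast_sub hab.le, div_add_one hba,
      div_div_div_cancel_right₀ hba, add_sub_cancel]
  · exact ⟨[], by simp [div_self (by positivity : (a : ℚ) ≠ 0)]⟩
  · obtain ⟨l, hl⟩ := exists_cwOfPath_eq_div (a - b) b (Nat.sub_pos_of_lt hab) hb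
    refine ⟨l ++ [true], ?_⟩
    rw [cwOfPath_append_true, hl, Nat.cast_sub hab.le, div_add_one (by positivity),
      sub_add_cancel]
termination_by a + b

theorem exists_cwOfPath_eq (r : ℚ) (hr : 0 < r) : ∃ l, cwOfPath l = r := by
  obtain ⟨l, hl⟩ := exists_cwOfPath_eq_div r.num.natAbs r.den
    (Int.natAbs_pos.mpr (Rat.num_pos.mpr hr).ne') r.pos
  refine ⟨l, hl.trans ?_⟩
  rw [Nat.cast_natAbs, Int.cast_abs, abs_of_pos (Int.cast_pos.mpr (Rat.num_pos.mpr hr)),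
    Rat.num_div_den]

/-- Every positive rational number appears exactly once as a label in the
Calkin–Wilf tree. -/
theorem cw_exists_unique (r : ℚ) (hr : 0 < r) : ∃! l : List Bool, cwOfPath l = r := by
  obtain ⟨l, hl⟩ := exists_cwOfPath_eq r hr
  exact ⟨l, hl, fun l' hl' => cwOfPath_injective (hl'.trans hl.symm)⟩
end

section
/- In any level of the Calkin-Wilf tree, the denominator of each fraction equals the numerator of the next fraction in that level (reading left to right). -/
/-- Level `n+1` (in the paper's 1-based numbering) of the Calkin–Wilf tree:
`cwLevel 0 = [(1,1)]`, and each pair `(a,b)` is replaced by `(a,a+b), (a+b,b)`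
in order to pass to the next level. -/
def cwLevel : ℕ → List (ℕ × ℕ)
  | 0 => [(1, 1)]
  | n + 1 => (cwLevel n).flatMap fun p => [(p.1, p.1 + p.2), (p.1 + p.2, p.2)]

/-! The children `(a, a+b), (a+b, b)` of `(a, b)` begin with numerator `a`, end with denominator
`b`, and are linked to each other through `a + b`. Hence if consecutive pairs of a level are
linked (denominator of one = numerator of the next), so are consecutive pairs of the next level,
and the property propagates by induction from `[(1,1)]`. -/

theorem List.IsChain.flatMap {α β : Type*} {R : α → α → Prop} {S : β → β → Prop}
    {l : List α} {f : α → List β} (hl : l.IsChain R) (hne : ∀ a ∈ l, f a ≠ [])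
    (hf : ∀ a ∈ l, (f a).IsChain S)
    (hR : ∀ a b, R a b → ∀ x ∈ (f a).getLast?, ∀ y ∈ (f b).head?, S x y) :
    (l.flatMap f).IsChain S := by
  rw [List.flatMap_def, List.isChain_flatten (by simpa using hne)]
  refine ⟨by simpa using hf, ?_⟩
  rw [List.isChain_map]
  exact hl.imp hR

section

variable {α : Type*} [Add α]

def cwChildren (p : α × α) : List (α × α) :=
  [(p.1, p.1 + p.2), (p.1 + p.2, p.2)]

theorem isChain_flatMap_cwChildren {l : List (α × α)} (hl : l.IsChain fun p q => p.2 = q.1) :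
    (l.flatMap cwChildren).IsChain fun p q => p.2 = q.1 :=
  hl.flatMap (by simp [cwChildren]) (by simp [cwChildren])
    (by simp +contextual [cwChildren])

end

theorem isChain_cwLevel (n : ℕ) : (cwLevel n).IsChain fun p q => p.2 = q.1 := by
  induction n with
  | zero => simp [cwLevel]
  | succ n ih => exact isChain_flatMap_cwChildren ih

/-- In any level of the Calkin–Wilf tree, the denominator of each fraction
equals the numerator of the next fraction in that level. -/
theorem cw_denom_eq_next_num (n i : ℕ) (h : i + 1 < (cwLevel n).length) :
    ((cwLevel n).getD i (0, 0)).2 = ((cwLevel n).getD (i + 1) (0, 0)).1 := by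
  rw [List.getD_eq_getElem _ _ (by omega), List.getD_eq_getElem _ _ h]
  exact List.isChain_iff_getElem.mp (isChain_cwLevel n) i h
end

section
/- In any level of the Calkin-Wilf tree, the j-th fraction from the left is the reciprocal of the j-th fraction from the right; i.e., if the level is the list L of pairs, then L(j) = (a,b) implies L(2^(n-1)+1-j) = (b,a). -/
theorem length_cwLevel (n : ℕ) : (cwLevel n).length = 2 ^ n := by
  induction n with
  | zero => rfl
  | succ n ih => simp [cwLevel, List.length_flatMap, ih, pow_succ]

theorem reverse_map_swap_cwLevel (n : ℕ) : (cwLevel n).reverse.map Prod.swap = cwLevel n := by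
  induction n with
  | zero => rfl
  | succ n ih =>
    have hrev : (cwLevel n).reverse = (cwLevel n).map Prod.swap := by
      simpa using congrArg (List.map Prod.swap) ih
    simp only [cwLevel, List.reverse_flatMap, List.map_flatMap, hrev, List.flatMap_map]
    congr 1
    funext p
    simp [Nat.add_comm]

theorem List.getElem_eq_of_reverse_map_eq {α : Type*} {f : α → α} {l : List α}
    (hl : l.reverse.map f = l) {i : ℕ} (hi : i < l.length) :
    l[l.length - 1 - i] = f l[i] := by
  have hi' : l.length - 1 - i < (l.reverse.map f).length := by simp; omega
  calc l[l.length - 1 - i] = (l.reverse.map f)[l.length - 1 - i] := by simp only [hl]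
    _ = f l[i] := by simp only [List.getElem_map, List.getElem_reverse]; congr; omega

/-- The `j`-th fraction from the left at a level of the Calkin–Wilf tree is
the reciprocal of the `j`-th fraction from the right: if the `j`-th entry
(1-based; the level `cwLevel n` has `2^n` entries) is `(a,b)`, then the
entry at position `2^n + 1 - j` is `(b,a)`. -/
theorem cw_level_reciprocal (n j a b : ℕ) (h1 : 1 ≤ j) (h2 : j ≤ 2 ^ n)
    (h : (cwLevel n).getD (j - 1) (0, 0) = (a, b)) :
    (cwLevel n).getD (2 ^ n - j) (0, 0) = (b, a) := by
  have hlen := length_cwLevel n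
  rw [List.getD_eq_getElem _ _ (by omega)] at h
  rw [List.getD_eq_getElem _ _ (by omega)]
  have hsym := List.getElem_eq_of_reverse_map_eq (reverse_map_swap_cwLevel n)
    (i := j - 1) (by omega)
  simp only [hlen, h, Prod.swap_prod_mk] at hsym
  rw [← hsym]
  congr 1
  omega
end

section
/- The sum of the simplicities of all fractions at any level of the Calkin-Wilf tree equals 1, where the simplicity of a reduced fraction a/b is 1/(a*b). -/
lemma cw_pos (n : ℕ) : ∀ p ∈ cwLevel n, 0 < p.1 ∧ 0 < p.2 := by
  induction n with
  | zero => simp [cwLevel]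
  | succ n ih =>
    intro p hp
    rw [cwLevel, List.mem_flatMap] at hp
    obtain ⟨a, ha, hpa⟩ := hp
    obtain ⟨h1, h2⟩ := ih a ha
    simp only [List.mem_cons, List.mem_singleton] at hpa
    rcases hpa with rfl | rfl | h
    · exact ⟨h1, by positivity⟩
    · exact ⟨by positivity, h2⟩
    · simp at h

lemma cw_step (l : List (ℕ × ℕ)) (h : ∀ p ∈ l, 0 < p.1 ∧ 0 < p.2) :
    (((l.flatMap fun p => [(p.1, p.1 + p.2), (p.1 + p.2, p.2)]).map
      fun p => 1 / ((p.1 : ℚ) * p.2)).sum = (l.map fun p => 1 / ((p.1 : ℚ) * p.2)).sum) := by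
  induction l with
  | nil => simp
  | cons q l ih =>
    obtain ⟨h1, h2⟩ := h q (by simp)
    have ha : (0 : ℚ) < q.1 := by exact_mod_cast h1
    have hb : (0 : ℚ) < q.2 := by exact_mod_cast h2
    simp only [List.flatMap_cons, List.map_append, List.sum_append, List.map_cons]
    rw [ih fun p hp => h p (List.mem_cons_of_mem _ hp)]
    push_cast
    simp only [List.map_nil, List.sum_cons, List.sum_nil, add_zero]
    have key : 1 / ((q.1 : ℚ) * (q.1 + q.2)) + 1 / ((q.1 + q.2) * q.2)
        = 1 / ((q.1 : ℚ) * q.2) := by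
      field_simp
      ring
    linarith [key]

/-- The sum of the simplicities `1/(a*b)` of all fractions `(a,b)` at any
level of the Calkin–Wilf tree is `1`. -/
theorem cw_level_sum_simplicity (n : ℕ) :
    ((cwLevel n).map fun p => 1 / ((p.1 : ℚ) * p.2)).sum = 1 := by
  induction n with
  | zero => simp [cwLevel]
  | succ n ih =>
    rw [cwLevel, cw_step _ (cw_pos n), ih]
end

section
/- The product of the complexities of all fractions at any level of the Calkin-Wilf tree is a perfect square, where the complexity of (a,b) is a*b. -/
/-- The product of the complexities `a*b` of all fractions `(a,b)` at any
level of the Calkin–Wilf tree is a perfect square. -/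
theorem cw_level_prod_complexity_isSquare (n : ℕ) :
    ∃ k : ℕ, ((cwLevel n).map fun p => p.1 * p.2).prod = k ^ 2 := by
  have key : ∀ l : List (ℕ × ℕ),
      ((l.flatMap fun p => [(p.1, p.1 + p.2), (p.1 + p.2, p.2)]).map
        fun p => p.1 * p.2).prod =
      ((l.map fun p => p.1 * p.2).prod) * ((l.map fun p => p.1 + p.2).prod) ^ 2 := by
    intro l
    induction l with
    | nil => simp
    | cons a t ih => simp [List.flatMap_cons, ih]; ring
  induction n with
  | zero => exact ⟨1, rfl⟩
  | succ n ih =>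
    obtain ⟨k, hk⟩ := ih
    exact ⟨k * ((cwLevel n).map fun p => p.1 + p.2).prod, by
      rw [cwLevel, key, hk]; ring⟩
end

section
/- The sum of all fractions at level n of the Calkin-Wilf tree equals 3·2^(n-2) − 1/2, for n ≥ 1. -/
theorem List.sum_map_flatMap {α β M : Type*} [AddMonoid M] (l : List α) (g : α → List β)
    (f : β → M) : ((l.flatMap g).map f).sum = (l.map fun a => ((g a).map f).sum).sum := by
  induction l <;> simp_all

theorem List.sum_map_comp_swap {α M : Type*} [AddCommMonoid M] {l : List (α × α)}
    (h : l.map Prod.swap = l.reverse) (f : α × α → M) :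
    (l.map (f ∘ Prod.swap)).sum = (l.map f).sum := by
  rw [← List.map_map, h, List.map_reverse, List.sum_reverse]

theorem cwLevel_snd_pos {n : ℕ} : ∀ p ∈ cwLevel n, 0 < p.2 := by
  induction n with
  | zero => simp [cwLevel]
  | succ n ih =>
    simp only [cwLevel, List.mem_flatMap, List.mem_cons, List.not_mem_nil, or_false]
    rintro p ⟨q, hq, rfl | rfl⟩
    · exact Nat.add_pos_right _ (ih q hq)
    · exact ih q hq

theorem map_swap_cwLevel (n : ℕ) : (cwLevel n).map Prod.swap = (cwLevel n).reverse := by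
  induction n with
  | zero => rfl
  | succ n ih =>
    rw [cwLevel, List.map_flatMap, List.reverse_flatMap, ← ih, List.flatMap_map]
    congr 1
    funext p
    simp [Nat.add_comm]

theorem sum_map_fst_div_add_cwLevel (n : ℕ) :
    ((cwLevel n).map fun p => (p.1 : ℚ) / (p.1 + p.2)).sum = 2 ^ n / 2 := by
  have hsnd : ((cwLevel n).map fun p => (p.2 : ℚ) / (p.1 + p.2)).sum
      = ((cwLevel n).map fun p => (p.1 : ℚ) / (p.1 + p.2)).sum := by
    rw [← List.sum_map_comp_swap (map_swap_cwLevel n)]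
    simp [Function.comp_def, add_comm]
  have hone : ∀ p ∈ cwLevel n, (p.1 : ℚ) / (p.1 + p.2) + p.2 / (p.1 + p.2) = 1 := by
    intro p hp
    have : (p.1 : ℚ) + p.2 ≠ 0 := by
      have := cwLevel_snd_pos p hp
      positivity
    field_simp
  have htotal := congrArg List.sum (List.map_congr_left hone)
  rw [List.sum_map_add, hsnd, List.map_const', List.sum_replicate, length_cwLevel] at htotal
  simp only [nsmul_eq_mul, mul_one, Nat.cast_pow, Nat.cast_ofNat] at htotal
  linarith

theorem sum_map_div_cwLevel_succ (n : ℕ) :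
    ((cwLevel (n + 1)).map fun p => (p.1 : ℚ) / p.2).sum
      = ((cwLevel n).map fun p => (p.1 : ℚ) / (p.1 + p.2)).sum + 2 ^ n
        + ((cwLevel n).map fun p => (p.1 : ℚ) / p.2).sum := by
  have children : ∀ p ∈ cwLevel n,
      ([(p.1, p.1 + p.2), (p.1 + p.2, p.2)].map fun q : ℕ × ℕ => (q.1 : ℚ) / q.2).sum
        = (p.1 : ℚ) / (p.1 + p.2) + 1 + p.1 / p.2 := by
    intro p hp
    have : (p.2 : ℚ) ≠ 0 := by exact_mod_cast (cwLevel_snd_pos p hp).ne'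
    simp only [List.map_cons, List.map_nil, List.sum_cons, List.sum_nil, Nat.cast_add]
    field_simp
    ring
  rw [cwLevel, List.sum_map_flatMap, List.map_congr_left children, List.sum_map_add,
    List.sum_map_add, List.map_const', List.sum_replicate, length_cwLevel]
  simp

theorem sum_map_div_cwLevel (n : ℕ) :
    ((cwLevel n).map fun p => (p.1 : ℚ) / p.2).sum = 3 * 2 ^ n / 2 - 1 / 2 := by
  induction n with
  | zero => norm_num [cwLevel]
  | succ n ih =>
    rw [sum_map_div_cwLevel_succ, sum_map_fst_div_add_cwLevel, ih]
    ring

/-- The sum of all fractions at level `n` (1-based) of the Calkin–Wilf tree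
equals `3 * 2^(n-2) - 1/2` (with `2^(n-2)` interpreted in `ℚ`, so for `n = 1`
it is `3 * 2⁻¹ - 1/2 = 1`). -/
theorem cw_level_sum (n : ℕ) (hn : 1 ≤ n) :
    ((cwLevel (n - 1)).map fun p => (p.1 : ℚ) / p.2).sum
      = 3 * (2 : ℚ) ^ ((n : ℤ) - 2) - 1 / 2 := by
  obtain ⟨m, rfl⟩ := Nat.exists_eq_add_of_le' hn
  rw [Nat.add_sub_cancel, sum_map_div_cwLevel, Nat.cast_add, Nat.cast_one,
    show (m : ℤ) + 1 - 2 = m - 1 by ring, zpow_sub_one₀ two_ne_zero, zpow_natCast]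
  ring
end

section
/- For every fraction at level n of the Calkin-Wilf tree, the sum of the terms of its continued fraction expansion [a₀; a₁, ..., a_m] (producing the fraction via the standard continued fraction algorithm) equals n. -/
/-- The canonical continued fraction expansion `[a₀; a₁, ..., a_m]` of `a/b`,
computed by the Euclidean algorithm. -/
def cfNat : ℕ → ℕ → List ℕ
  | _, 0 => []
  | a, b + 1 => (a / (b + 1)) :: cfNat (b + 1) (a % (b + 1))
  termination_by a b => b
  decreasing_by exact Nat.lt_succ_iff.mpr (Nat.lt_succ_iff.mp (Nat.mod_lt _ (Nat.succ_pos b)))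

lemma cfNat_pos (a b : ℕ) (hb : 0 < b) : cfNat a b = (a / b) :: cfNat b (a % b) := by
  cases b with
  | zero => omega
  | succ b => rw [cfNat]

lemma cfNat_symm (a b : ℕ) (ha : 0 < a) (hb : 0 < b) :
    (cfNat a b).sum = (cfNat b a).sum := by
  rcases lt_trichotomy a b with h | h | h
  · rw [cfNat_pos a b hb, Nat.div_eq_of_lt h, Nat.mod_eq_of_lt h]
    simp
  · subst h; rfl
  · rw [cfNat_pos b a ha, Nat.div_eq_of_lt h, Nat.mod_eq_of_lt h]
    simp

lemma cfNat_add (a b : ℕ) (hb : 0 < b) :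
    (cfNat (a + b) b).sum = (cfNat a b).sum + 1 := by
  rw [cfNat_pos (a + b) b hb, cfNat_pos a b hb]
  have h1 : (a + b) / b = a / b + 1 := by
    rw [Nat.add_div_right _ hb]
  have h2 : (a + b) % b = a % b := by
    rw [Nat.add_mod_right]
  rw [h1, h2]
  simp [List.sum_cons]; ring

lemma cw_invariant (n : ℕ) (p : ℕ × ℕ) (hp : p ∈ cwLevel n) :
    0 < p.1 ∧ 0 < p.2 ∧ (cfNat p.1 p.2).sum = n + 1 := by
  induction n generalizing p with
  | zero =>
    simp [cwLevel] at hp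
    subst hp
    refine ⟨one_pos, one_pos, ?_⟩
    show (cfNat 1 1).sum = 0 + 1
    rw [cfNat_pos 1 1 one_pos]
    simp [cfNat]
  | succ n ih =>
    simp only [cwLevel, List.mem_flatMap] at hp
    obtain ⟨q, hq, hpq⟩ := hp
    obtain ⟨ha, hb, hsum⟩ := ih q hq
    simp only [List.mem_cons, List.mem_singleton] at hpq
    rcases hpq with h | h | h
    · subst h
      refine ⟨ha, by positivity, ?_⟩
      simp only
      rw [cfNat_pos q.1 (q.1 + q.2) (by positivity),
        Nat.div_eq_of_lt (by omega), Nat.mod_eq_of_lt (by omega)]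
      have : q.2 + q.1 = q.1 + q.2 := Nat.add_comm _ _
      rw [List.sum_cons, ← this, cfNat_add q.2 q.1 ha, cfNat_symm q.2 q.1 hb ha]
      omega
    · subst h
      refine ⟨by positivity, hb, ?_⟩
      simp only
      rw [cfNat_add q.1 q.2 hb]
      omega
    · simp at h

/-- The sum of the terms of the continued fraction expansion of any fraction
at level `n` (1-based) of the Calkin–Wilf tree equals `n`. -/
theorem cw_cf_sum (n : ℕ) (hn : 1 ≤ n) (p : ℕ × ℕ) (hp : p ∈ cwLevel (n - 1)) :
    (cfNat p.1 p.2).sum = n := by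
  have := (cw_invariant (n - 1) p hp).2.2
  omega
end

section
/- If the n-th left diagonal of the Calkin-Wilf tree is the sequence j ↦ (a·j+b)/(c·j+d), then the (2n−1)-th left diagonal is j ↦ (a·j+b)/((a+c)·j+(b+d)) and the (2n)-th left diagonal is j ↦ ((a+c)·j+(b+d))/(c·j+d), for n > 1. -/
/-- The `j`-th term (1-based) of the `n`-th left diagonal of the Calkin–Wilf
tree: the entry at position `n` (1-based) of the `(j-1)`-st level after the
first level containing position `n` (position `n` first exists at the level
with `2^(Nat.clog 2 n)` entries). -/
def cwDiag (n j : ℕ) : ℕ × ℕ :=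
  (cwLevel (Nat.clog 2 n + (j - 1))).getD (n - 1) (0, 0)

/-! Position `m` of a level has its children at positions `2m - 1` and `2m` of the next level,
and for `n > 1` positions `2n - 1` and `2n` first occur exactly one level below position `n`.
Hence the `j`-th terms of the diagonals `2n - 1` and `2n` are the two children `(p, p + q)` and
`(p + q, q)` of the `j`-th term `(p, q)` of the `n`-th diagonal. -/

theorem List.getElem?_flatMap_pair {α β : Type*} (f g : α → β) (l : List α) (i : ℕ) :
    (l.flatMap fun x => [f x, g x])[2 * i]? = l[i]?.map f ∧
      (l.flatMap fun x => [f x, g x])[2 * i + 1]? = l[i]?.map g := by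
  induction l generalizing i with
  | nil => simp
  | cons x l ih =>
    cases i with
    | zero => simp
    | succ i => simpa [Nat.mul_succ] using ih i

theorem cwLevel_length (k : ℕ) : (cwLevel k).length = 2 ^ k := by
  induction k with
  | zero => rfl
  | succ k ih => simp [cwLevel, ih, pow_succ, mul_comm]

theorem Nat.clog_mul_base {b n : ℕ} (hb : 1 < b) (hn : n ≠ 0) :
    Nat.clog b (b * n) = Nat.clog b n + 1 := by
  have hbn : b ≤ b * n := Nat.le_mul_of_pos_right b (Nat.pos_of_ne_zero hn)
  rw [Nat.clog_of_one_lt hb (by omega), Nat.add_sub_assoc hb.le,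
    Nat.mul_add_div (by omega), Nat.div_eq_of_lt (by omega), add_zero]

theorem Nat.clog_mul_base_sub_one {b n : ℕ} (hb : 1 < b) (hn : 1 < n) :
    Nat.clog b (b * n - 1) = Nat.clog b n + 1 := by
  have hbn : b * 2 ≤ b * n := Nat.mul_le_mul_left b hn
  have hsum : b * n - 1 + b - 1 = b * n + (b - 2) := by omega
  rw [Nat.clog_of_one_lt hb (by omega), hsum,
    Nat.mul_add_div (by omega), Nat.div_eq_of_lt (by omega), add_zero]

theorem cwLevel_getElem?_eq_some_cwDiag {n : ℕ} (hn : 0 < n) (j : ℕ) :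
    (cwLevel (Nat.clog 2 n + (j - 1)))[n - 1]? = some (cwDiag n j) := by
  have hlt : n - 1 < (cwLevel (Nat.clog 2 n + (j - 1))).length := by
    rw [cwLevel_length]
    calc n - 1 < n := by omega
      _ ≤ 2 ^ Nat.clog 2 n := Nat.le_pow_clog one_lt_two n
      _ ≤ 2 ^ (Nat.clog 2 n + (j - 1)) := Nat.pow_le_pow_right two_pos (by omega)
  rw [cwDiag, List.getD_eq_getElem _ _ hlt, List.getElem?_eq_getElem hlt]

theorem cwDiag_two_mul_sub_one {n : ℕ} (hn : 1 < n) (j : ℕ) :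
    cwDiag (2 * n - 1) j = ((cwDiag n j).1, (cwDiag n j).1 + (cwDiag n j).2) := by
  have hlevel : Nat.clog 2 (2 * n - 1) + (j - 1) = Nat.clog 2 n + (j - 1) + 1 := by
    rw [Nat.clog_mul_base_sub_one one_lt_two hn]; omega
  have hpos : 2 * n - 1 - 1 = 2 * (n - 1) := by omega
  rw [cwDiag, hlevel, hpos, cwLevel, List.getD_eq_getElem?_getD,
    (List.getElem?_flatMap_pair _ _ _ _).1, cwLevel_getElem?_eq_some_cwDiag (by omega)]
  rfl

theorem cwDiag_two_mul {n : ℕ} (hn : 0 < n) (j : ℕ) :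
    cwDiag (2 * n) j = ((cwDiag n j).1 + (cwDiag n j).2, (cwDiag n j).2) := by
  have hlevel : Nat.clog 2 (2 * n) + (j - 1) = Nat.clog 2 n + (j - 1) + 1 := by
    rw [Nat.clog_mul_base one_lt_two hn.ne']; omega
  have hpos : 2 * n - 1 = 2 * (n - 1) + 1 := by omega
  rw [cwDiag, hlevel, hpos, cwLevel, List.getD_eq_getElem?_getD,
    (List.getElem?_flatMap_pair _ _ _ _).2, cwLevel_getElem?_eq_some_cwDiag hn]
  rfl

/-- If the `n`-th left diagonal of the Calkin–Wilf tree is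
`j ↦ (a·j+b)/(c·j+d)`, then the `(2n−1)`-th left diagonal is
`j ↦ (a·j+b)/((a+c)·j+(b+d))` and the `(2n)`-th left diagonal is
`j ↦ ((a+c)·j+(b+d))/(c·j+d)`, for `n > 1`. -/
theorem cw_diag_children (n a b c d : ℕ) (hn : 1 < n)
    (h : ∀ j, 1 ≤ j → cwDiag n j = (a * j + b, c * j + d)) :
    (∀ j, 1 ≤ j → cwDiag (2 * n - 1) j = (a * j + b, (a + c) * j + (b + d))) ∧
    (∀ j, 1 ≤ j → cwDiag (2 * n) j = ((a + c) * j + (b + d), c * j + d)) := by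
  refine ⟨fun j hj => ?_, fun j hj => ?_⟩
  · rw [cwDiag_two_mul_sub_one hn, h j hj, Prod.mk.injEq]
    exact ⟨rfl, by ring⟩
  · rw [cwDiag_two_mul (by omega), h j hj, Prod.mk.injEq]
    exact ⟨by ring, rfl⟩
end

section
/- If the n-th left diagonal of the Calkin-Wilf tree has j-th term (a·j+b)/(c·j+d), then a·d − b·c = −1. -/
/-- The coefficient quadruple `(a, b, c, d)` of the `n`-th left diagonal
`L_n(j) = (a·j+b)/(c·j+d)` of the Calkin–Wilf tree, defined recursively:
`L₁` has `(0,1,1,0)`, and if `L_n` has `(a,b,c,d)` then `L_{2n−1}` has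
`(a,b,a+c,b+d)` and `L_{2n}` has `(a+c,b+d,c,d)`. -/
def diagCoef : ℕ → ℤ × ℤ × ℤ × ℤ
  | 0 => (0, 0, 0, 0)
  | 1 => (0, 1, 1, 0)
  | n + 2 =>
    let p := diagCoef ((n + 3) / 2)
    if n % 2 = 0 then (p.1 + p.2.2.1, p.2.1 + p.2.2.2, p.2.2.1, p.2.2.2)
    else (p.1, p.2.1, p.1 + p.2.2.1, p.2.1 + p.2.2.2)
  decreasing_by omega

/-- If the `n`-th left diagonal of the Calkin–Wilf tree has `j`-th term
`(a·j+b)/(c·j+d)`, then `a·d − b·c = −1`. -/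
theorem cw_diag_det (n : ℕ) (hn : 1 ≤ n) (a b c d : ℤ)
    (h : diagCoef n = (a, b, c, d)) : a * d - b * c = -1 := by
  induction n using Nat.strong_induction_on generalizing a b c d with
  | _ n ih =>
    match n, hn with
    | 1, _ =>
      simp only [diagCoef, Prod.mk.injEq] at h
      obtain ⟨rfl, rfl, rfl, rfl⟩ := h
      ring
    | (k+2), _ =>
      rw [diagCoef] at h
      have hlt : (k+3)/2 < k+2 := by omega
      have h1 : 1 ≤ (k+3)/2 := by omega
      have key := ih _ hlt h1 (diagCoef ((k+3)/2)).1 (diagCoef ((k+3)/2)).2.1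
        (diagCoef ((k+3)/2)).2.2.1 (diagCoef ((k+3)/2)).2.2.2 rfl
      split_ifs at h <;>
      · simp only [Prod.mk.injEq] at h
        obtain ⟨rfl, rfl, rfl, rfl⟩ := h
        linarith [key]
end
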